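/- If B ∈ M_d(ℂ) is positive semidefinite with factor width at most k (i.e., B = Σ_n |b_n⟩⟨b_n| with each b_n having at most k nonzero coordinates), then the matrix M_{k-1}(B), with diagonal entries (k−1)|B_{ii}| and off-diagonal entries −|B_{ij}|, is positive semidefinite. -/

import Mathlib

/-!
Off the diagonal `M_{k-1}(B)` is `≤ 0`, so for real `x` the quadratic form only decreases
when `x` is replaced by `|x|`. Writing `B = ∑ₙ bₙ bₙ*`, the entries satisfy
`|B_ij| ≤ ∑ₙ |bₙᵢ| |bₙⱼ|` and `|B_ii| = ∑ₙ |bₙᵢ|²`, so with `cₙᵢ = |bₙᵢ| |xᵢ|` the form is at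
least `∑ₙ (k ∑ᵢ cₙᵢ² - (∑ᵢ cₙᵢ)²)`. Each summand is nonnegative by Cauchy–Schwarz, since `cₙ`
is supported on the at most `k` coordinates where `bₙ` is nonzero.
-/

open Matrix Finset
open scoped ComplexOrder

section Comparison

variable {n 𝕜 : Type*} [DecidableEq n]

/-- The matrix `M_m(B)`, with a real parameter `m`. -/
def comparisonMatrix [Norm 𝕜] (m : ℝ) (B : Matrix n n 𝕜) : Matrix n n ℝ :=
  of fun i j => if i = j then m * ‖B i i‖ else -‖B i j‖

theorem comparisonMatrix_isHermitian [NormedAddCommGroup 𝕜] [StarAddMonoid 𝕜]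
    [NormedStarGroup 𝕜] {B : Matrix n n 𝕜} (hB : B.IsHermitian) (m : ℝ) :
    (comparisonMatrix m B).IsHermitian := by
  ext i j
  simp only [comparisonMatrix, conjTranspose_apply, of_apply, star_trivial, eq_comm (a := j),
    ← hB.apply i j, norm_star]
  split_ifs with h <;> simp [h]

theorem comparisonMatrix_eq_smul_diagonal_sub_map_norm [Norm 𝕜] (m : ℝ) (B : Matrix n n 𝕜) :
    comparisonMatrix m B = (m + 1) • diagonal (fun i => ‖B i i‖) - B.map (‖·‖) := by
  ext i j
  by_cases h : i = j
  · subst h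
    simp [comparisonMatrix, add_mul]
  · simp [comparisonMatrix, h]

end Comparison

theorem dotProduct_mulVec_le_abs {n : Type*} [Fintype n]
    {A : Matrix n n ℝ} (hA : ∀ i j, 0 ≤ A i j) (x : n → ℝ) : x ⬝ᵥ (A *ᵥ x) ≤ |x| ⬝ᵥ (A *ᵥ |x|) := by
  simp only [dotProduct, mulVec, mul_sum, Pi.abs_apply]
  refine sum_le_sum fun i _ => sum_le_sum fun j _ => ?_
  rw [mul_left_comm, mul_left_comm |x i|, ← abs_mul]
  exact mul_le_mul_of_nonneg_left (le_abs_self _) (hA i j)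

theorem sq_sum_le_card_support_mul_sum_sq {ι α : Type*} [Fintype ι] [Semiring α]
    [LinearOrder α] [IsStrictOrderedRing α] [ExistsAddOfLE α] (f : ι → α) :
    (∑ i, f i) ^ 2 ≤ #{i | f i ≠ 0} * ∑ i, f i ^ 2 := by
  have h := sq_sum_le_card_mul_sum_sq (s := {i | f i ≠ 0}) (f := f)
  rwa [sum_filter_ne_zero, sum_filter_of_ne fun i _ hi => by simpa using hi] at h

theorem sq_sum_norm_mul_le_of_card_support_le {n 𝕜 : Type*} [Fintype n] [NormedAddGroup 𝕜]
    [DecidableEq 𝕜] {k : ℕ} {v : n → 𝕜} (hv : #{i | v i ≠ 0} ≤ k) (y : n → ℝ) :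
    (∑ i, ‖v i‖ * y i) ^ 2 ≤ k * ∑ i, (‖v i‖ * y i) ^ 2 := by
  refine (sq_sum_le_card_support_mul_sum_sq _).trans
    (mul_le_mul_of_nonneg_right ?_ (by positivity))
  have hsub : ({i | ‖v i‖ * y i ≠ 0} : Finset n) ⊆ ({i | v i ≠ 0} : Finset n) := fun i => by
    simp only [mem_filter, mem_univ, true_and]
    exact fun h => norm_ne_zero_iff.1 (left_ne_zero_of_mul h)
  exact_mod_cast (card_le_card hsub).trans hv

section Gram

variable {ι n 𝕜 : Type*} [Fintype ι] [RCLike 𝕜] (b : ι → n → 𝕜)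

theorem sum_vecMulVec_self_star_apply (i j : n) :
    (∑ l, vecMulVec (b l) (star (b l))) i j = ∑ l, b l i * star (b l j) := by
  simp only [Matrix.sum_apply, vecMulVec_apply, Pi.star_apply]

theorem norm_sum_vecMulVec_self_star_apply_le (i j : n) :
    ‖(∑ l, vecMulVec (b l) (star (b l))) i j‖ ≤ ∑ l, ‖b l i‖ * ‖b l j‖ := by
  rw [sum_vecMulVec_self_star_apply]
  exact (norm_sum_le _ _).trans_eq (by simp only [norm_mul, norm_star])

theorem norm_sum_vecMulVec_self_star_apply_self (i : n) :
    ‖(∑ l, vecMulVec (b l) (star (b l))) i i‖ = ∑ l, ‖b l i‖ ^ 2 := by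
  rw [sum_vecMulVec_self_star_apply]
  simp_rw [RCLike.star_def, RCLike.mul_conj]
  norm_cast
  exact abs_of_nonneg (by positivity)

variable [Fintype n]

theorem dotProduct_map_norm_sum_vecMulVec_mulVec_le {y : n → ℝ} (hy : 0 ≤ y) :
    y ⬝ᵥ ((∑ l, vecMulVec (b l) (star (b l))).map (‖·‖) *ᵥ y) ≤
      ∑ l, (∑ i, ‖b l i‖ * y i) ^ 2 := by
  calc y ⬝ᵥ ((∑ l, vecMulVec (b l) (star (b l))).map (‖·‖) *ᵥ y)
      ≤ ∑ i, y i * ∑ j, (∑ l, ‖b l i‖ * ‖b l j‖) * y j := by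
        simp only [dotProduct, mulVec, map_apply]
        gcongr with i _ j _
        · exact hy i
        · exact hy j
        · exact norm_sum_vecMulVec_self_star_apply_le b i j
    _ = ∑ l, (∑ i, ‖b l i‖ * y i) ^ 2 := by
        simp only [sq, mul_sum, sum_mul]
        symm
        rw [Finset.sum_comm]
        refine sum_congr rfl fun i _ => ?_
        rw [Finset.sum_comm]
        exact sum_congr rfl fun j _ => sum_congr rfl fun l _ => by ring

theorem dotProduct_diagonal_norm_sum_vecMulVec_mulVec [DecidableEq n] (x : n → ℝ) :
    x ⬝ᵥ (diagonal (fun i => ‖(∑ l, vecMulVec (b l) (star (b l))) i i‖) *ᵥ x) =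
      ∑ l, ∑ i, (‖b l i‖ * x i) ^ 2 := by
  simp only [dotProduct, mulVec_diagonal, norm_sum_vecMulVec_self_star_apply_self, mul_sum,
    sum_mul, mul_pow]
  rw [Finset.sum_comm]
  exact sum_congr rfl fun i _ => sum_congr rfl fun l _ => by ring

end Gram

theorem comparison_M_k_sub_one_posSemidef_of_factor_width_general {d k : ℕ}
    (B : Matrix (Fin d) (Fin d) ℂ)
    (N : ℕ) (b : Fin N → Fin d → ℂ)
    (hsupp : ∀ n, (univ.filter (fun i => b n i ≠ 0)).card ≤ k)
    (hdec : B = ∑ n, vecMulVec (b n) (star (b n))) :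
    (Matrix.of fun i j =>
      if i = j then ((k : ℝ) - 1) * ‖B i i‖ else -‖B i j‖ :
      Matrix (Fin d) (Fin d) ℝ).PosSemidef := by
  have hB : B.PosSemidef := by
    rw [hdec]
    exact posSemidef_sum univ fun n _ => posSemidef_vecMulVec_self_star (b n)
  change (comparisonMatrix ((k : ℝ) - 1) B).PosSemidef
  refine posSemidef_iff_dotProduct_mulVec.2
    ⟨comparisonMatrix_isHermitian hB.isHermitian _, fun x => ?_⟩
  rw [star_trivial, comparisonMatrix_eq_smul_diagonal_sub_map_norm, sub_add_cancel, sub_mulVec,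
    dotProduct_sub, smul_mulVec, dotProduct_smul, sub_nonneg, smul_eq_mul]
  calc x ⬝ᵥ (B.map (‖·‖) *ᵥ x)
      ≤ |x| ⬝ᵥ (B.map (‖·‖) *ᵥ |x|) :=
        dotProduct_mulVec_le_abs (fun i j => norm_nonneg (B i j)) x
    _ ≤ ∑ n, (∑ i, ‖b n i‖ * |x i|) ^ 2 :=
        hdec ▸ dotProduct_map_norm_sum_vecMulVec_mulVec_le b (abs_nonneg x)
    _ ≤ ∑ n, k * ∑ i, (‖b n i‖ * |x i|) ^ 2 :=
        sum_le_sum fun n _ => sq_sum_norm_mul_le_of_card_support_le (hsupp n) _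
    _ = k * x ⬝ᵥ (diagonal (fun i => ‖B i i‖) *ᵥ x) := by
        rw [hdec, dotProduct_diagonal_norm_sum_vecMulVec_mulVec]
        simp only [← mul_sum, mul_pow, sq_abs]

/-- If `B` is PSD with factor width at most `k`, then `M_{k-1}(B)` (diagonal
entries `(k-1)|B_{ii}|`, off-diagonal entries `-|B_{ij}|`) is positive semidefinite. -/
theorem comparison_M_k_sub_one_posSemidef_of_factor_width {d k : ℕ}
    (B : Matrix (Fin d) (Fin d) ℂ) (hB : B.PosSemidef)
    (N : ℕ) (b : Fin N → Fin d → ℂ)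
    (hsupp : ∀ n, (univ.filter (fun i => b n i ≠ 0)).card ≤ k)
    (hdec : B = ∑ n, vecMulVec (b n) (star (b n))) :
    (Matrix.of fun i j =>
      if i = j then ((k : ℝ) - 1) * ‖B i i‖ else -‖B i j‖ :
      Matrix (Fin d) (Fin d) ℝ).PosSemidef :=
  comparison_M_k_sub_one_posSemidef_of_factor_width_general B N b hsupp hdec
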